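/- Let A₁ be the complex symmetric matrix with rows (0,1,0),(1,0,0),(0,0,0) and A₂ the one with rows (0,0,1),(0,0,0),(1,0,0), and let Z₀ := span_ℂ{A₁, A₂} be the 2-dimensional complex subspace they span inside the symmetric complex 3×3 matrices. For B in SU(3), the following are equivalent: (i) B·X·Bᵀ ∈ Z₀ for every X ∈ Z₀; (ii) the entries of B satisfy b₁₂ = b₁₃ = b₂₁ = b₃₁ = 0, i.e. B leaves ℂ·e₁ and ℂ·e₂ ⊕ ℂ·e₃ invariant (so B belongs to S(U(1)×U(2))). (Consequently, the isotropy group of Z₀ under the Cartan representation of SU(3) is isomorphic to S(U(1)×U(2)).) -/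

import Mathlib

/-!
Indices start at 0. `B * A₁ * Bᵀ` and `B * A₂ * Bᵀ` are the symmetrised products of column 0 of
`B` with columns 1 and 2, so their membership in `Z₀` says that `B i 0 * B i j = 0` for all `i`
and that `B 1 0 * B 2 j + B 1 j * B 2 0 = 0`, for `j = 1, 2`. If `B 1 0` or `B 2 0` were nonzero,
these relations would kill the lower-right 2×2 block of `B`, which is impossible since rows 1
and 2 of a unitary matrix are orthonormal. So column 0 is `B 0 0 • e₀` with `B 0 0 ≠ 0`, and the
relations for `i = 0` give `B 0 1 = B 0 2 = 0`. The converse is a direct computation.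
-/

open Matrix

/-- `A₁`, the symmetric matrix with rows `(0,1,0),(1,0,0),(0,0,0)`. -/
noncomputable def A₁ : Matrix (Fin 3) (Fin 3) ℂ := !![0, 1, 0; 1, 0, 0; 0, 0, 0]

/-- `A₂`, the symmetric matrix with rows `(0,0,1),(0,0,0),(1,0,0)`. -/
noncomputable def A₂ : Matrix (Fin 3) (Fin 3) ℂ := !![0, 0, 1; 0, 0, 0; 1, 0, 0]

/-- `Z₀ = span_ℂ{A₁, A₂}`, a complex plane inside the symmetric complex 3×3 matrices. -/
noncomputable def Z₀ : Submodule ℂ (Matrix (Fin 3) (Fin 3) ℂ) :=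
  Submodule.span ℂ {A₁, A₂}

theorem Submodule.forall_mem_span_pair_map_mem_iff {R M N : Type*} [Semiring R]
    [AddCommMonoid M] [Module R M] [AddCommMonoid N] [Module R N]
    (f : M →ₗ[R] N) (p : Submodule R N) (x y : M) :
    (∀ z ∈ span R {x, y}, f z ∈ p) ↔ f x ∈ p ∧ f y ∈ p := by
  change span R {x, y} ≤ p.comap f ↔ _
  rw [span_le, Set.insert_subset_iff, Set.singleton_subset_iff]
  rfl

def Matrix.cartanAction {R n : Type*} [CommSemiring R] [Fintype n] (B : Matrix n n R) :
    Matrix n n R →ₗ[R] Matrix n n R where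
  toFun X := B * X * Bᵀ
  map_add' X Y := by rw [Matrix.mul_add, Matrix.add_mul]
  map_smul' c X := by rw [Matrix.mul_smul, Matrix.smul_mul]; rfl

section Unitary

variable {K : Type*} [Field K] [StarRing K] {B : Matrix (Fin 3) (Fin 3) K}

theorem Matrix.not_forall_lowerRight_eq_zero_of_mul_conjTranspose_eq_one (hB : B * Bᴴ = 1) :
    ¬ ∀ i j : Fin 3, i ≠ 0 → j ≠ 0 → B i j = 0 := by
  intro h
  have entry (i k : Fin 3) (hi : i ≠ 0) (hk : k ≠ 0) : (B * Bᴴ) i k = B i 0 * star (B k 0) := by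
    simp [mul_apply, Fin.sum_univ_three, h i _ hi, h k _ hk]
  have h11 := entry 1 1 (by decide) (by decide)
  have h12 := entry 1 2 (by decide) (by decide)
  have h22 := entry 2 2 (by decide) (by decide)
  simp only [hB, one_apply_eq, one_apply_ne (by decide : (1 : Fin 3) ≠ 2)] at h11 h12 h22
  rcases mul_eq_zero.mp h12.symm with h1 | h2
  · simp [h1] at h11
  · simp [star_eq_zero.mp h2] at h22

theorem Matrix.offDiag_col_zero_eq_zero_of_mul_conjTranspose_eq_one (hB : B * Bᴴ = 1)
    (hdiag : ∀ i, ∀ j ≠ 0, B i 0 * B i j = 0)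
    (hoff : ∀ j ≠ 0, B 1 0 * B 2 j + B 1 j * B 2 0 = 0) :
    B 1 0 = 0 ∧ B 2 0 = 0 := by
  refine ⟨by_contra fun h10 => ?_, by_contra fun h20 => ?_⟩ <;>
    refine B.not_forall_lowerRight_eq_zero_of_mul_conjTranspose_eq_one hB ?_
  · have h1 (j : Fin 3) (hj : j ≠ 0) : B 1 j = 0 := (mul_eq_zero.mp (hdiag 1 j hj)).resolve_left h10
    have h2 (j : Fin 3) (hj : j ≠ 0) : B 2 j = 0 := by
      have := hoff j hj
      rw [h1 j hj, zero_mul, add_zero] at this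
      exact (mul_eq_zero.mp this).resolve_left h10
    intro i j hi hj
    fin_cases i
    · exact absurd rfl hi
    · exact h1 j hj
    · exact h2 j hj
  · have h2 (j : Fin 3) (hj : j ≠ 0) : B 2 j = 0 := (mul_eq_zero.mp (hdiag 2 j hj)).resolve_left h20
    have h1 (j : Fin 3) (hj : j ≠ 0) : B 1 j = 0 := by
      have := hoff j hj
      rw [h2 j hj, mul_zero, zero_add] at this
      exact (mul_eq_zero.mp this).resolve_right h20
    intro i j hi hj
    fin_cases i
    · exact absurd rfl hi
    · exact h1 j hj
    · exact h2 j hj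

theorem Matrix.offDiag_row_col_zero_eq_zero_of_mul_conjTranspose_eq_one (hB : B * Bᴴ = 1)
    (hdiag : ∀ i, ∀ j ≠ 0, B i 0 * B i j = 0)
    (hoff : ∀ j ≠ 0, B 1 0 * B 2 j + B 1 j * B 2 0 = 0) :
    B 0 1 = 0 ∧ B 0 2 = 0 ∧ B 1 0 = 0 ∧ B 2 0 = 0 := by
  obtain ⟨h10, h20⟩ := B.offDiag_col_zero_eq_zero_of_mul_conjTranspose_eq_one hB hdiag hoff
  have hcol : star (B 0 0) * B 0 0 = 1 := by
    have hB' : Bᴴ * B = 1 := mul_eq_one_comm.mp hB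
    simpa [mul_apply, Fin.sum_univ_three, h10, h20] using congrFun (congrFun hB' 0) 0
  have h00 : B 0 0 ≠ 0 := by rintro h; simp [h] at hcol
  exact ⟨(mul_eq_zero.mp (hdiag 0 1 (by decide))).resolve_left h00,
    (mul_eq_zero.mp (hdiag 0 2 (by decide))).resolve_left h00, h10, h20⟩

end Unitary

theorem mem_Z₀_iff {X : Matrix (Fin 3) (Fin 3) ℂ} :
    X ∈ Z₀ ↔ ∃ a b : ℂ, X = !![0, a, b; a, 0, 0; b, 0, 0] := by
  have combination (a b : ℂ) : a • A₁ + b • A₂ = !![0, a, b; a, 0, 0; b, 0, 0] := by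
    ext i j
    fin_cases i <;> fin_cases j <;> simp [A₁, A₂]
  rw [Z₀, Submodule.mem_span_pair]
  exact exists₂_congr fun a b => by rw [combination, eq_comm]

theorem mul_A₁_mul_transpose_apply (B : Matrix (Fin 3) (Fin 3) ℂ) (i k : Fin 3) :
    (B * A₁ * Bᵀ) i k = B i 0 * B k 1 + B i 1 * B k 0 := by
  simp [A₁, mul_apply, Fin.sum_univ_three]
  ring

theorem mul_A₂_mul_transpose_apply (B : Matrix (Fin 3) (Fin 3) ℂ) (i k : Fin 3) :
    (B * A₂ * Bᵀ) i k = B i 0 * B k 2 + B i 2 * B k 0 := by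
  simp [A₂, mul_apply, Fin.sum_univ_three]
  ring

theorem apply_eq_zero_of_mem_Z₀ {X : Matrix (Fin 3) (Fin 3) ℂ} (hX : X ∈ Z₀) (i k : Fin 3)
    (hik : i = 0 ↔ k = 0) : X i k = 0 := by
  obtain ⟨a, b, rfl⟩ := mem_Z₀_iff.mp hX
  fin_cases i <;> fin_cases k <;> simp_all

theorem mul_A_mul_transpose_mem_Z₀_of_offDiag_eq_zero (B : Matrix (Fin 3) (Fin 3) ℂ)
    (hB : B 0 1 = 0 ∧ B 0 2 = 0 ∧ B 1 0 = 0 ∧ B 2 0 = 0) :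
    B * A₁ * Bᵀ ∈ Z₀ ∧ B * A₂ * Bᵀ ∈ Z₀ := by
  obtain ⟨h01, h02, h10, h20⟩ := hB
  refine ⟨mem_Z₀_iff.mpr ⟨B 0 0 * B 1 1, B 0 0 * B 2 1, ?_⟩,
    mem_Z₀_iff.mpr ⟨B 0 0 * B 1 2, B 0 0 * B 2 2, ?_⟩⟩ <;>
  · ext i k
    fin_cases i <;> fin_cases k <;>
      simp [mul_A₁_mul_transpose_apply, mul_A₂_mul_transpose_apply, h01, h02, h10, h20, mul_comm]

theorem quadratic_relations_of_mul_A_mul_transpose_mem_Z₀ {B : Matrix (Fin 3) (Fin 3) ℂ}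
    (h₁ : B * A₁ * Bᵀ ∈ Z₀) (h₂ : B * A₂ * Bᵀ ∈ Z₀) :
    (∀ i, ∀ j ≠ 0, B i 0 * B i j = 0) ∧ ∀ j ≠ 0, B 1 0 * B 2 j + B 1 j * B 2 0 = 0 := by
  have key (j : Fin 3) (hj : j ≠ 0) (i k : Fin 3) (hik : i = 0 ↔ k = 0) :
      B i 0 * B k j + B i j * B k 0 = 0 := by
    fin_cases j
    · exact absurd rfl hj
    · exact (mul_A₁_mul_transpose_apply B i k).symm.trans (apply_eq_zero_of_mem_Z₀ h₁ i k hik)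
    · exact (mul_A₂_mul_transpose_apply B i k).symm.trans (apply_eq_zero_of_mem_Z₀ h₂ i k hik)
  refine ⟨fun i j hj => ?_, fun j hj => key j hj 1 2 (by decide)⟩
  have h2 : 2 * (B i 0 * B i j) = 0 := by linear_combination key j hj i i Iff.rfl
  exact (mul_eq_zero.mp h2).resolve_left two_ne_zero

theorem isotropy_SU3_at_Z₀_general
    (B : Matrix (Fin 3) (Fin 3) ℂ) (hB : B * B.conjTranspose = 1) :
    (∀ X ∈ Z₀, B * X * Bᵀ ∈ Z₀) ↔
      (B 0 1 = 0 ∧ B 0 2 = 0 ∧ B 1 0 = 0 ∧ B 2 0 = 0) := by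
  change (∀ X ∈ Submodule.span ℂ {A₁, A₂}, B.cartanAction X ∈ Z₀) ↔ _
  rw [Submodule.forall_mem_span_pair_map_mem_iff]
  refine ⟨fun ⟨h₁, h₂⟩ => ?_, mul_A_mul_transpose_mem_Z₀_of_offDiag_eq_zero B⟩
  obtain ⟨hdiag, hoff⟩ := quadratic_relations_of_mul_A_mul_transpose_mem_Z₀ h₁ h₂
  exact B.offDiag_row_col_zero_eq_zero_of_mul_conjTranspose_eq_one hB hdiag hoff

/-- For `B ∈ SU(3)`, the Cartan action `X ↦ B·X·Bᵀ` maps `Z₀ = span{A₁,A₂}` into itself if and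
only if `b₁₂ = b₁₃ = b₂₁ = b₃₁ = 0`, i.e. `B ∈ S(U(1)×U(2))`.  (Hence the isotropy group of `Z₀`
is isomorphic to `S(U(1)×U(2))`.) -/
theorem isotropy_SU3_at_Z₀
    (B : Matrix (Fin 3) (Fin 3) ℂ) (hB : B * B.conjTranspose = 1) (hdet : B.det = 1) :
    (∀ X ∈ Z₀, B * X * Bᵀ ∈ Z₀) ↔
      (B 0 1 = 0 ∧ B 0 2 = 0 ∧ B 1 0 = 0 ∧ B 2 0 = 0) :=
  isotropy_SU3_at_Z₀_general B hB
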